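/- arXiv:1808.00512 — 4 statements merged into one kernel-verified Lean document; each statement's English description precedes it below -/
import Mathlib

section
/- Let C be the N × N matrix over a commutative ring with entries C_{nj} = binom(m₁, n−j)(−1)^{n+j+1} x₁^{n−j} for j ≤ n−1 and 0 otherwise. Define coefficients β_{nm}^{(1)} = binom(m₁, n−m) if m ≤ n−1 and 0 if m ≥ n, and recursively β_{nm}^{(k)} = −Σ_{j=m+1}^{n+1−k} binom(m₁, j−m) β_{nj}^{(k−1)} for k ≥ 2. Then for every k ≥ 1, the entries of the k-th power of C satisfy (C^k)_{nm} = (−1)^{n+m+1} β_{nm}^{(k)} x₁^{n−m}. -/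
open Finset

/-- The recursively defined coefficients `β_{nm}^{(k)}` (with 1-based indices `n`, `m`). -/
def betaCoeff (m₁ : ℕ) : ℕ → ℕ → ℕ → ℤ
  | 0, _, _ => 0
  | 1, n, m => if m < n then (m₁.choose (n - m) : ℤ) else 0
  | (k + 2), n, m =>
      - ∑ j ∈ Finset.Icc (m + 1) (n + 1 - (k + 2)),
          (m₁.choose (j - m) : ℤ) * betaCoeff m₁ (k + 1) n j

lemma betaCoeff_vanish (m₁ : ℕ) : ∀ k n m, n < m + k → betaCoeff m₁ k n m = 0
  | 0, _, _, _ => rfl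
  | 1, n, m, h => by
      rw [betaCoeff, if_neg (by omega)]
  | (k + 2), n, m, h => by
      rw [betaCoeff, Finset.Icc_eq_empty (by omega), Finset.sum_empty, neg_zero]

lemma step_sum {R : Type*} [CommRing R] (m₁ N k i j : ℕ) (x₁ : R) (hi : i < N) :
    ∑ l ∈ Finset.range N,
      (-1 : R) ^ (i + l + 1) * (betaCoeff m₁ (k + 1) (i + 1) (l + 1) : R) * x₁ ^ (i - l)
        * (if j < l then (m₁.choose (l - j) : R) * (-1 : R) ^ (l + j + 1) * x₁ ^ (l - j) else 0)
    = (-1 : R) ^ (i + j + 1) * (betaCoeff m₁ (k + 2) (i + 1) (j + 1) : R) * x₁ ^ (i - j) := by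
  have hbeta : betaCoeff m₁ (k + 2) (i + 1) (j + 1)
      = - ∑ p ∈ Finset.Icc (j + 2) (i - k),
          (m₁.choose (p - (j + 1)) : ℤ) * betaCoeff m₁ (k + 1) (i + 1) p := by
    rw [betaCoeff, show i + 1 + 1 - (k + 2) = i - k from by omega]
  rw [hbeta]
  push_cast
  have hRHS : (-1 : R) ^ (i + j + 1)
      * (-(∑ p ∈ Finset.Icc (j + 2) (i - k),
          (m₁.choose (p - (j + 1)) : R) * (betaCoeff m₁ (k + 1) (i + 1) p : R)))
      * x₁ ^ (i - j)
      = ∑ p ∈ Finset.Icc (j + 2) (i - k),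
          (-1 : R) ^ (i + j) * (m₁.choose (p - (j + 1)) : R)
            * (betaCoeff m₁ (k + 1) (i + 1) p : R) * x₁ ^ (i - j) := by
    rw [mul_neg, neg_mul, Finset.mul_sum, Finset.sum_mul, ← neg_one_mul, Finset.mul_sum]
    apply Finset.sum_congr rfl
    intro p _
    rw [pow_succ]
    ring
  rw [hRHS]
  -- restrict the left sum
  have hsub : Finset.Icc (j + 1) (i - (k + 1)) ⊆ Finset.range N := by
    intro l hl
    rw [Finset.mem_Icc] at hl
    rw [Finset.mem_range]
    omega
  rw [← Finset.sum_subset hsub (by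
    intro l _ hl
    rw [Finset.mem_Icc, not_and_or] at hl
    rcases hl with hl | hl
    · rw [if_neg (by omega), mul_zero]
    · have : betaCoeff m₁ (k + 1) (i + 1) (l + 1) = 0 :=
        betaCoeff_vanish m₁ (k + 1) (i + 1) (l + 1) (by omega)
      rw [this]
      push_cast
      ring)]
  rw [show Finset.Icc (j + 1) (i - (k + 1)) = Finset.Ico (j + 1) (i - (k + 1) + 1) by
        rw [Finset.Ico_add_one_right_eq_Icc],
      show Finset.Icc (j + 2) (i - k) = Finset.Ico (j + 2) (i - k + 1) by
        rw [Finset.Ico_add_one_right_eq_Icc],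
      Finset.sum_Ico_eq_sum_range, Finset.sum_Ico_eq_sum_range,
      show i - (k + 1) + 1 - (j + 1) = i - k + 1 - (j + 2) by omega]
  apply Finset.sum_congr rfl
  intro t ht
  rw [Finset.mem_range] at ht
  have h1 : j < j + 1 + t := by omega
  have h2 : j + 1 + t + (k + 1) ≤ i := by omega
  rw [if_pos h1]
  have hch : j + 2 + t - (j + 1) = j + 1 + t - j := by omega
  rw [hch]
  have hsign : (-1 : R) ^ (i + (j + 1 + t) + 1) * (-1 : R) ^ ((j + 1 + t) + j + 1)
      = (-1 : R) ^ (i + j) := by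
    rw [← pow_add, show i + (j + 1 + t) + 1 + ((j + 1 + t) + j + 1) = i + j + 2 * (j + t + 2) by
      ring, pow_add, pow_mul]
    norm_num
  have hx : x₁ ^ (i - (j + 1 + t)) * x₁ ^ ((j + 1 + t) - j) = x₁ ^ (i - j) := by
    rw [← pow_add]
    congr 1
    omega
  have hidx : j + 2 + t = j + 1 + t + 1 := by omega
  rw [hidx]
  calc (-1 : R) ^ (i + (j + 1 + t) + 1) * (betaCoeff m₁ (k + 1) (i + 1) (j + 1 + t + 1) : R)
        * x₁ ^ (i - (j + 1 + t))
        * ((m₁.choose (j + 1 + t - j) : R) * (-1 : R) ^ ((j + 1 + t) + j + 1)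
            * x₁ ^ ((j + 1 + t) - j))
      = ((-1 : R) ^ (i + (j + 1 + t) + 1) * (-1 : R) ^ ((j + 1 + t) + j + 1))
          * (m₁.choose (j + 1 + t - j) : R) * (betaCoeff m₁ (k + 1) (i + 1) (j + 1 + t + 1) : R)
          * (x₁ ^ (i - (j + 1 + t)) * x₁ ^ ((j + 1 + t) - j)) := by ring
    _ = _ := by rw [hsign, hx]

theorem matrixC_pow_entries
    {R : Type*} [CommRing R] (N m₁ : ℕ) (hN : 1 ≤ N) (hm : 1 ≤ m₁) (x₁ : R)
    (C : Matrix (Fin N) (Fin N) R)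
    (hC : ∀ i j : Fin N,
      C i j = if (j : ℕ) < (i : ℕ)
        then (m₁.choose ((i : ℕ) - (j : ℕ)) : R) * (-1 : R) ^ ((i : ℕ) + (j : ℕ) + 1)
              * x₁ ^ ((i : ℕ) - (j : ℕ))
        else 0) :
    ∀ k, 1 ≤ k → ∀ i j : Fin N,
      (C ^ k) i j = (-1 : R) ^ ((i : ℕ) + (j : ℕ) + 1)
        * (betaCoeff m₁ k ((i : ℕ) + 1) ((j : ℕ) + 1) : R)
        * x₁ ^ ((i : ℕ) - (j : ℕ)) := by
  have key : ∀ k, ∀ i j : Fin N,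
      (C ^ (k + 1)) i j = (-1 : R) ^ ((i : ℕ) + (j : ℕ) + 1)
        * (betaCoeff m₁ (k + 1) ((i : ℕ) + 1) ((j : ℕ) + 1) : R)
        * x₁ ^ ((i : ℕ) - (j : ℕ)) := by
    intro k
    induction k with
    | zero =>
        intro i j
        rw [pow_one, hC]
        rw [show betaCoeff m₁ 1 ((i : ℕ) + 1) ((j : ℕ) + 1)
            = if (j : ℕ) + 1 < (i : ℕ) + 1 then (m₁.choose ((i : ℕ) + 1 - ((j : ℕ) + 1)) : ℤ)
              else 0 from rfl]
        by_cases h : (j : ℕ) < (i : ℕ)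
        · rw [if_pos h, if_pos (by omega), show (i : ℕ) + 1 - ((j : ℕ) + 1) = (i : ℕ) - (j : ℕ)
            by omega]
          push_cast
          ring
        · rw [if_neg h, if_neg (by omega)]
          push_cast
          ring
    | succ k IH =>
        intro i j
        rw [pow_succ, Matrix.mul_apply]
        have hstep := step_sum m₁ N k (i : ℕ) (j : ℕ) x₁ i.isLt
        rw [← hstep, ← Fin.sum_univ_eq_sum_range (fun l =>
          (-1 : R) ^ ((i : ℕ) + l + 1) * (betaCoeff m₁ (k + 1) ((i : ℕ) + 1) (l + 1) : R)
            * x₁ ^ ((i : ℕ) - l)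
            * (if (j : ℕ) < l then (m₁.choose (l - (j : ℕ)) : R) * (-1 : R) ^ (l + (j : ℕ) + 1)
                * x₁ ^ (l - (j : ℕ)) else 0)) N]
        apply Finset.sum_congr rfl
        intro l _
        rw [IH i l, hC l j]
  intro k hk i j
  obtain ⟨k, rfl⟩ := Nat.exists_eq_add_of_le hk
  rw [Nat.add_comm 1 k]
  exact key k i j
end

section
/- Let p(z;t) = (z − x₁(t))^{m₁+1} ∏_{n=2}^{N}(z − x_n(t)) with x₁,...,x_N differentiable complex functions of t having pairwise distinct values at time t, and coefficients y_n(t) defined by p(z;t) = z^{N+m₁} + Σ_{n=1}^{N+m₁} y_n(t) z^{N+m₁−n}. Then the derivative of the multiple root satisfies ẋ₁ = −[(m₁+1)! ∏_{n=2}^N (x₁ − x_n)]^{−1} Σ_{j=1}^N (N−j+1)_{m₁} x₁^{N−j} ẏ_j, where (α)_m denotes the Pochhammer symbol. -/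
/-!
Since `x₁(t)` is a root of multiplicity `m₁ + 1` of `p(·; t)`, it is a root of `∂_z^{m₁} p(·; t)`
for every `t`. Differentiating `∂_z^{m₁} p(x₁(t); t) = 0` in `t` gives
`(∂_t ∂_z^{m₁} p)(x₁) + (∂_z^{m₁+1} p)(x₁) ẋ₁ = 0`. By Leibniz' rule
`∂_z^{m₁+1} p(x₁) = (m₁+1)! ∏_{n ≥ 2} (x₁ - x_n)`, which is nonzero because the roots are distinct,
and expanding `∂_t ∂_z^{m₁} p` in the coefficients `y_j` produces the Pochhammer weights
`(N - j + 1)_{m₁} = (N - j + m₁)! / (N - j)!`.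
-/

open Finset Polynomial

namespace Polynomial

section CommRing

variable {R : Type*} [CommRing R]

theorem natDegree_X_sub_C_pow_mul_prod [Nontrivial R] {ι : Type*} (a : R) (m : ℕ) (s : Finset ι)
    (b : ι → R) : ((X - C a) ^ m * ∏ i ∈ s, (X - C (b i))).natDegree = m + #s := by
  rw [((monic_X_sub_C a).pow m).natDegree_mul (monic_prod_X_sub_C b s),
    (monic_X_sub_C a).natDegree_pow, natDegree_X_sub_C, mul_one,
    natDegree_finsetProd_X_sub_C_eq_card]

theorem isRoot_iterate_derivative_X_sub_C_pow_succ_mul (a : R) (m : ℕ) (r : R[X]) :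
    (derivative^[m] ((X - C a) ^ (m + 1) * r)).IsRoot a := by
  have h := pow_sub_dvd_iterate_derivative_of_pow_dvd m (dvd_mul_right ((X - C a) ^ (m + 1)) r)
  rwa [Nat.add_sub_cancel_left, pow_one, dvd_iff_isRoot] at h

theorem eval_iterate_derivative_X_sub_C_pow_mul (a : R) (m : ℕ) (r : R[X]) :
    (derivative^[m] ((X - C a) ^ m * r)).eval a = m.factorial * r.eval a := by
  rw [iterate_derivative_mul, eval_finsetSum, sum_eq_single_of_mem 0 (mem_range.mpr m.succ_pos)]
  · rw [Nat.choose_zero_right, one_smul, eval_mul, Nat.sub_zero, iterate_derivative_X_sub_pow_self,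
      eval_natCast, Function.iterate_zero_apply]
  · intro k hk hk0
    rw [iterate_derivative_X_sub_pow, eval_smul, eval_mul, eval_smul, eval_pow,
      Nat.sub_sub_self (mem_range_succ_iff.mp hk), eval_sub, eval_X, eval_C, sub_self,
      zero_pow hk0, smul_zero, zero_mul, smul_zero]

end CommRing

variable {𝕜 𝔸 : Type*} [NontriviallyNormedField 𝕜] [NormedCommRing 𝔸] [NormedAlgebra 𝕜 𝔸]

variable (𝕜 𝔸) in
def differentiableCoeffSubring : Subring (𝕜 → 𝔸[X]) where
  carrier := {P | ∀ k, Differentiable 𝕜 fun t => (P t).coeff k}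
  mul_mem' {P Q} hP hQ k := by
    simp only [Pi.mul_apply, coeff_mul]
    exact Differentiable.fun_sum fun ij _ => (hP ij.1).mul (hQ ij.2)
  one_mem' k := differentiable_const _
  add_mem' hP hQ k := by
    simp only [Pi.add_apply, coeff_add]
    exact (hP k).add (hQ k)
  zero_mem' k := differentiable_const _
  neg_mem' hP k := by
    simp only [Pi.neg_apply, coeff_neg]
    exact (hP k).neg

theorem X_sub_C_mem_differentiableCoeffSubring {g : 𝕜 → 𝔸} (hg : Differentiable 𝕜 g) :
    (fun t => X - C (g t)) ∈ differentiableCoeffSubring 𝕜 𝔸 := by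
  rintro (_ | k)
  · simpa using hg.neg
  · simp [coeff_X]

theorem iterate_derivative_mem_differentiableCoeffSubring {P : 𝕜 → 𝔸[X]}
    (hP : P ∈ differentiableCoeffSubring 𝕜 𝔸) (m : ℕ) :
    (fun t => derivative^[m] (P t)) ∈ differentiableCoeffSubring 𝕜 𝔸 := by
  intro k
  simp only [coeff_iterate_derivative, nsmul_eq_mul]
  exact (hP (k + m)).const_mul _

theorem hasDerivAt_eval_of_natDegree_lt {P : 𝕜 → 𝔸[X]} {z : 𝕜 → 𝔸} {z' : 𝔸} {t : 𝕜} {d : ℕ}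
    (hd : ∀ τ, (P τ).natDegree < d) (hP : ∀ k, DifferentiableAt 𝕜 (fun τ => (P τ).coeff k) t)
    (hz : HasDerivAt z z' t) :
    HasDerivAt (fun τ => (P τ).eval (z τ))
      (∑ k ∈ range d, deriv (fun τ => (P τ).coeff k) t * z t ^ k
        + (derivative (P t)).eval (z t) * z') t := by
  have hderiv : (derivative (P t)).eval (z t) * z'
      = ∑ k ∈ range d, (P t).coeff k * (k * z t ^ (k - 1) * z') := by
    rw [derivative_eval, sum_over_range' _ (fun n => by simp) d (hd t), sum_mul]
    exact sum_congr rfl fun k _ => by ring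
  rw [hderiv, ← sum_add_distrib]
  simp_rw [eval_eq_sum_range' (hd _)]
  exact HasDerivAt.fun_sum fun k _ => (hP k).hasDerivAt.mul (hz.fun_pow k)

theorem sum_deriv_coeff_mul_add_eval_derivative_mul_eq_zero {P : 𝕜 → 𝔸[X]} {z : 𝕜 → 𝔸} {t : 𝕜}
    {d : ℕ} (hP : P ∈ differentiableCoeffSubring 𝕜 𝔸) (hd : ∀ τ, (P τ).natDegree < d)
    (hz : DifferentiableAt 𝕜 z t) (hroot : ∀ τ, (P τ).IsRoot (z τ)) :
    ∑ k ∈ range d, deriv (fun τ => (P τ).coeff k) t * z t ^ k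
      + (derivative (P t)).eval (z t) * deriv z t = 0 :=
  (hasDerivAt_eval_of_natDegree_lt hd (fun k => (hP k).differentiableAt) hz.hasDerivAt).unique <|
    (hasDerivAt_const t 0).congr_of_eventuallyEq <| .of_forall hroot

theorem sum_Icc_ascPochhammer_mul_deriv_coeff {𝕜 𝕜' : Type*} [NontriviallyNormedField 𝕜]
    [NontriviallyNormedField 𝕜'] [NormedAlgebra 𝕜 𝕜'] {P : 𝕜 → 𝕜'[X]} {N m : ℕ} {t : 𝕜}
    (hlead : deriv (fun τ => (P τ).coeff (N + m)) t = 0) (z : 𝕜') :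
    ∑ j ∈ Icc 1 N, (ascPochhammer 𝕜' m).eval ((N : 𝕜') - j + 1) * z ^ (N - j) *
        deriv (fun τ => (P τ).coeff (N + m - j)) t
      = ∑ k ∈ range (N + 1), deriv (fun τ => (derivative^[m] (P τ)).coeff k) t * z ^ k := by
  simp only [coeff_iterate_derivative, nsmul_eq_mul, deriv_const_mul_field']
  rw [sum_range_succ, hlead, mul_zero, zero_mul, add_zero]
  refine sum_bij' (fun j _ => N - j) (fun k _ => N - k) ?_ ?_ ?_ ?_ fun j hj => ?_
  iterate 4 (intro i hi; simp only [mem_Icc, mem_range] at hi ⊢; omega)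
  obtain ⟨h1j, hjN⟩ := mem_Icc.mp hj
  have hcast : (N : 𝕜') - j + 1 = ((N - j + 1 : ℕ) : 𝕜') := by
    push_cast [Nat.cast_sub hjN]
    ring
  rw [hcast, ascPochhammer_nat_eq_natCast_descFactorial,
    show N - j + 1 + m - 1 = N + m - j by omega, show N - j + m = N + m - j by omega]
  ring

end Polynomial

theorem multiple_root_first_derivative_formula
    (N m₁ : ℕ) (hN : 2 ≤ N)
    (x : Fin N → ℝ → ℂ)
    (hdiff : ∀ n, Differentiable ℝ (x n))
    (hdist : ∀ t, Function.Injective fun n => x n t)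
    (p : ℝ → Polynomial ℂ)
    (hp : ∀ t, p t = (X - C (x ⟨0, by omega⟩ t)) ^ (m₁ + 1) *
        ∏ n ∈ Finset.univ \ {(⟨0, by omega⟩ : Fin N)}, (X - C (x n t)))
    (y : ℕ → ℝ → ℂ)
    (hy : ∀ j t, y j t = (p t).coeff (N + m₁ - j)) :
    ∀ t,
      deriv (x ⟨0, by omega⟩) t
        = -(((m₁ + 1).factorial : ℂ) *
              ∏ n ∈ Finset.univ \ {(⟨0, by omega⟩ : Fin N)},
                (x ⟨0, by omega⟩ t - x n t))⁻¹ *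
            ∑ j ∈ Finset.Icc 1 N,
              (ascPochhammer ℂ m₁).eval ((N : ℂ) - (j : ℂ) + 1) *
                (x ⟨0, by omega⟩ t) ^ (N - j) * deriv (y j) t := by
  intro t
  set i₁ : Fin N := ⟨0, by omega⟩
  set s : Finset (Fin N) := univ \ {i₁}
  have hp_mem : p ∈ differentiableCoeffSubring ℝ ℂ := by
    rw [show p = (fun τ => X - C (x i₁ τ)) ^ (m₁ + 1) * ∏ n ∈ s, fun τ => X - C (x n τ) from
      funext fun τ => by simp only [hp, Pi.mul_apply, Pi.pow_apply, prod_apply]]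
    exact mul_mem (pow_mem (X_sub_C_mem_differentiableCoeffSubring (hdiff i₁)) _)
      (prod_mem fun n _ => X_sub_C_mem_differentiableCoeffSubring (hdiff n))
  have hdeg (τ : ℝ) : (p τ).natDegree = N + m₁ := by
    rw [hp τ, natDegree_X_sub_C_pow_mul_prod, card_sdiff_of_subset (subset_univ _), card_singleton,
      card_fin]
    omega
  have hlead : deriv (fun τ => (p τ).coeff (N + m₁)) t = 0 := by
    have hmonic (τ : ℝ) : (p τ).Monic :=
      hp τ ▸ ((monic_X_sub_C _).pow _).mul (monic_prod_X_sub_C _ _)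
    rw [show (fun τ => (p τ).coeff (N + m₁)) = fun _ => 1 from
      funext fun τ => hdeg τ ▸ (hmonic τ).coeff_natDegree, deriv_const]
  have hK : ((m₁ + 1).factorial : ℂ) * ∏ n ∈ s, (x i₁ t - x n t) ≠ 0 :=
    mul_ne_zero (Nat.cast_ne_zero.mpr (Nat.factorial_ne_zero _)) <| prod_ne_zero_iff.mpr fun n hn =>
      sub_ne_zero.mpr fun h => (mem_sdiff.mp hn).2 (mem_singleton.mpr (hdist t h).symm)
  have hsum := sum_deriv_coeff_mul_add_eval_derivative_mul_eq_zero (d := N + 1)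
    (iterate_derivative_mem_differentiableCoeffSubring hp_mem m₁)
    (fun τ => (natDegree_iterate_derivative (p τ) m₁).trans_lt (by rw [hdeg τ]; omega))
    (hdiff i₁ t) (fun τ => hp τ ▸ isRoot_iterate_derivative_X_sub_C_pow_succ_mul _ _ _)
  rw [← Function.iterate_succ_apply' derivative, hp t, eval_iterate_derivative_X_sub_C_pow_mul,
    eval_prod] at hsum
  simp only [eval_sub, eval_X, eval_C] at hsum
  rw [show y = fun j τ => (p τ).coeff (N + m₁ - j) from funext₂ hy,
    sum_Icc_ascPochhammer_mul_deriv_coeff hlead, neg_mul, ← mul_neg, eq_inv_mul_iff_mul_eq₀ hK]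
  linear_combination hsum
end

section
/- Let q(z;t) = ∏_{n=1}^N (z − x_n(t)) = z^N + Σ_{n=1}^N ξ_n(t) z^{N−n}, with x₁,...,x_N twice differentiable complex-valued functions having pairwise distinct values at time t. Then for each n, ẍ_n = Σ_{ℓ≠n} 2 ẋ_n ẋ_ℓ/(x_n − x_ℓ) − [∏_{ℓ≠n}(x_n − x_ℓ)]^{−1} Σ_{j=1}^N x_n^{N−j} ξ̈_j. -/
open Finset Polynomial

/-! Freeze `z = x_n(t)` and differentiate `s ↦ q(z; s) - z^N = ∑ⱼ z^(N-j) ξⱼ(s)` twice at `s = t`;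
the termwise differentiation is legitimate because the `ξⱼ` are polynomials in the `xᵢ`. On the
product side the factor `z - x_n(s)` vanishes at `s = t`, so the product rule leaves
`-ẍ_n P - 2 ẋ_n P'`, where `P(s) = ∏_{ℓ≠n} (z - x_ℓ(s))` and `P'/P = -∑_{ℓ≠n} ẋ_ℓ / (z - x_ℓ)`
is a sum of logarithmic derivatives. Dividing by `P(t) ≠ 0` gives the formula. -/

section TwiceDifferentiable

variable (𝕜 𝔸 : Type*) [NontriviallyNormedField 𝕜] [NormedCommRing 𝔸] [NormedAlgebra 𝕜 𝔸]

def twiceDifferentiableSubalgebra : Subalgebra 𝔸 (𝕜 → 𝔸) where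
  carrier := {f | Differentiable 𝕜 f ∧ Differentiable 𝕜 (deriv f)}
  mul_mem' := by
    rintro f g ⟨hf, hf'⟩ ⟨hg, hg'⟩
    refine ⟨hf.mul hg, ?_⟩
    rw [show deriv (f * g) = deriv f * g + f * deriv g from
      funext fun s => deriv_mul (hf s) (hg s)]
    exact (hf'.mul hg).add (hf.mul hg')
  add_mem' := by
    rintro f g ⟨hf, hf'⟩ ⟨hg, hg'⟩
    refine ⟨hf.add hg, ?_⟩
    rw [show deriv (f + g) = deriv f + deriv g from funext fun s => deriv_add (hf s) (hg s)]
    exact hf'.add hg'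
  algebraMap_mem' c := ⟨differentiable_const c, by
    rw [show algebraMap 𝔸 (𝕜 → 𝔸) c = fun _ => c from rfl, deriv_const']
    exact differentiable_const 0⟩

variable {𝕜 𝔸}

theorem deriv_deriv_mul {f g : 𝕜 → 𝔸} (hf : f ∈ twiceDifferentiableSubalgebra 𝕜 𝔸)
    (hg : g ∈ twiceDifferentiableSubalgebra 𝕜 𝔸) (t : 𝕜) :
    deriv (deriv fun s => f s * g s) t
      = deriv (deriv f) t * g t + 2 * (deriv f t * deriv g t) + f t * deriv (deriv g) t := by
  obtain ⟨hf, hf'⟩ := hf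
  obtain ⟨hg, hg'⟩ := hg
  rw [show deriv (fun s => f s * g s) = fun s => deriv f s * g s + f s * deriv g s from
    funext fun s => deriv_fun_mul (hf s) (hg s)]
  refine (((hf' t).hasDerivAt.fun_mul (hg t).hasDerivAt).fun_add
    ((hf t).hasDerivAt.fun_mul (hg' t).hasDerivAt)).deriv.trans ?_
  ring

theorem deriv_sum_const_mul {ι : Type*} (u : Finset ι) (c : ι → 𝔸) {f : ι → 𝕜 → 𝔸}
    (hf : ∀ i ∈ u, Differentiable 𝕜 (f i)) :
    deriv (fun s => ∑ i ∈ u, c i * f i s) = fun s => ∑ i ∈ u, c i * deriv (f i) s :=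
  funext fun s => by
    rw [deriv_fun_sum fun i hi => ((hf i hi) s).const_mul (c i)]
    exact sum_congr rfl fun i hi => deriv_const_mul _ (hf i hi s)

end TwiceDifferentiable

theorem deriv_deriv_prod_of_eq_zero {𝕜 𝕜' ι : Type*} [NontriviallyNormedField 𝕜]
    [NontriviallyNormedField 𝕜'] [NormedAlgebra 𝕜 𝕜'] [Fintype ι] [DecidableEq ι]
    {f : ι → 𝕜 → 𝕜'} (hf : ∀ i, f i ∈ twiceDifferentiableSubalgebra 𝕜 𝕜') {n : ι} {t : 𝕜}
    (hn : f n t = 0) (hne : ∀ m ≠ n, f m t ≠ 0) :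
    deriv (deriv fun s => ∏ i, f i s) t
      = (∏ i ∈ univ.erase n, f i t)
          * (deriv (deriv (f n)) t + 2 * deriv (f n) t * ∑ m ∈ univ.erase n, logDeriv (f m) t) := by
  set g : 𝕜 → 𝕜' := fun s => ∏ i ∈ univ.erase n, f i s
  have hg : g ∈ twiceDifferentiableSubalgebra 𝕜 𝕜' := by
    convert Subalgebra.prod_mem _ (t := univ.erase n) fun i _ => hf i using 1
    ext s; simp [g]
  have hgt : g t ≠ 0 := prod_ne_zero_iff.mpr fun m hm => hne m (ne_of_mem_erase hm)
  have hg' : deriv g t = g t * ∑ m ∈ univ.erase n, logDeriv (f m) t := by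
    rw [← logDeriv_prod (fun m hm => hne m (ne_of_mem_erase hm))
      (fun m _ => (hf m).1.differentiableAt), logDeriv_apply, mul_div_cancel₀ _ hgt]
  rw [show (fun s => ∏ i, f i s) = fun s => f n s * g s from
    funext fun s => (mul_prod_erase _ _ (mem_univ n)).symm, deriv_deriv_mul (hf n) hg, hn, hg']
  ring

theorem coeff_prod_X_sub_C_mem {T R ι : Type*} [CommRing R] (A : Subring (T → R)) (u : Finset ι)
    {x : ι → T → R} (hx : ∀ i, x i ∈ A) (k : ℕ) :
    (fun s => (∏ i ∈ u, (X - C (x i s))).coeff k) ∈ A := by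
  set P : A[X] := ∏ i ∈ u, (X - C ⟨x i, hx i⟩)
  have hP : ∀ s, ∏ i ∈ u, (X - C (x i s)) = P.map ((Pi.evalRingHom _ s).comp A.subtype) := by
    simp [P, Polynomial.map_prod]
  convert (P.coeff k).2 using 1
  ext s
  rw [hP, coeff_map]
  rfl

theorem Polynomial.Monic.eval_eq_pow_add_sum {R : Type*} [CommSemiring R] {p : R[X]}
    (hp : p.Monic) (z : R) :
    p.eval z = z ^ p.natDegree
      + ∑ j ∈ Icc 1 p.natDegree, p.coeff (p.natDegree - j) * z ^ (p.natDegree - j) := by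
  rw [eval_eq_sum_range, sum_range_succ, hp.coeff_natDegree, one_mul, add_comm,
    ← Finset.Ico_add_one_right_eq_Icc, sum_Ico_reflect (fun k => p.coeff k * z ^ k) 1 le_rfl]
  simp

theorem Polynomial.sum_Icc_pow_mul_coeff_prod_X_sub_C {R ι : Type*} [CommRing R] [Nontrivial R]
    (u : Finset ι) (y : ι → R) (z : R) :
    ∑ j ∈ Icc 1 #u, z ^ (#u - j) * (∏ i ∈ u, (X - C (y i))).coeff (#u - j)
      = ∏ i ∈ u, (z - y i) - z ^ #u := by
  have h := (monic_prod_of_monic u _ fun i _ => monic_X_sub_C (y i)).eval_eq_pow_add_sum z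
  rw [natDegree_finsetProd_X_sub_C_eq_card] at h
  simp only [eval_prod, eval_sub, eval_X, eval_C] at h
  rw [h, add_sub_cancel_left]
  exact sum_congr rfl fun j _ => mul_comm _ _

theorem simple_roots_second_derivative_formula_general
    (N : ℕ)
    (x : Fin N → ℝ → ℂ)
    (hdiff : ∀ n, Differentiable ℝ (x n))
    (hdiff2 : ∀ n, Differentiable ℝ (deriv (x n)))
    (ξ : ℕ → ℝ → ℂ)
    (hξ : ∀ j t, ξ j t = (∏ i : Fin N, (X - C (x i t))).coeff (N - j))
    (t : ℝ)
    (hdist : ∀ n m : Fin N, n ≠ m → x n t ≠ x m t) :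
    ∀ n : Fin N,
      deriv (deriv (x n)) t
        = (∑ ℓ ∈ Finset.univ \ {n},
            2 * deriv (x n) t * deriv (x ℓ) t / (x n t - x ℓ t))
          - (∏ ℓ ∈ Finset.univ \ {n}, (x n t - x ℓ t))⁻¹ *
              ∑ j ∈ Finset.Icc 1 N, (x n t) ^ (N - j) * deriv (deriv (ξ j)) t := by
  intro n
  set S := twiceDifferentiableSubalgebra ℝ ℂ
  set z := x n t
  have hx : ∀ i, x i ∈ S := fun i => ⟨hdiff i, hdiff2 i⟩
  have hξS : ∀ j, ξ j ∈ S := fun j => by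
    simpa only [← hξ, Subalgebra.mem_toSubring] using
      coeff_prod_X_sub_C_mem S.toSubring univ hx (N - j)
  have hroots : ∀ i, (fun s => z - x i s) ∈ S := fun i => S.sub_mem (S.algebraMap_mem z) (hx i)
  have hexpand : (fun s => ∑ j ∈ Icc 1 N, z ^ (N - j) * ξ j s)
      = fun s => (∏ i, (z - x i s)) - z ^ N := by
    ext s
    simpa [hξ] using sum_Icc_pow_mul_coeff_prod_X_sub_C univ (fun i => x i s) z
  have key : ∑ j ∈ Icc 1 N, z ^ (N - j) * deriv (deriv (ξ j)) t
      = (∏ ℓ ∈ univ.erase n, (z - x ℓ t))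
          * (-deriv (deriv (x n)) t
            + ∑ ℓ ∈ univ.erase n, 2 * deriv (x n) t * deriv (x ℓ) t / (z - x ℓ t)) := by
    calc _ = deriv (deriv fun s => ∑ j ∈ Icc 1 N, z ^ (N - j) * ξ j s) t := by
          rw [deriv_sum_const_mul _ _ fun j _ => (hξS j).1,
            deriv_sum_const_mul _ _ fun j _ => (hξS j).2]
      _ = deriv (deriv fun s => ∏ i, (z - x i s)) t := by
          rw [hexpand, deriv_sub_const_fun]
      _ = _ := by
          rw [deriv_deriv_prod_of_eq_zero hroots (sub_self z)
            fun m hm => sub_ne_zero.mpr (hdist n m hm.symm)]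
          simp only [deriv_const_sub', deriv.fun_neg', logDeriv_apply, mul_sum]
          congr 2
          exact sum_congr rfl fun m _ => by ring
  have hP : ∏ ℓ ∈ univ.erase n, (z - x ℓ t) ≠ 0 :=
    prod_ne_zero_iff.mpr fun ℓ hℓ => sub_ne_zero.mpr (hdist n ℓ (ne_of_mem_erase hℓ).symm)
  rw [sdiff_singleton_eq_erase, key, inv_mul_cancel_left₀ hP]
  ring

theorem simple_roots_second_derivative_formula
    (N : ℕ) (hN : 2 ≤ N)
    (x : Fin N → ℝ → ℂ)
    (hdiff : ∀ n, Differentiable ℝ (x n))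
    (hdiff2 : ∀ n, Differentiable ℝ (deriv (x n)))
    (ξ : ℕ → ℝ → ℂ)
    (hξ : ∀ j t, ξ j t = (∏ i : Fin N, (X - C (x i t))).coeff (N - j))
    (t : ℝ)
    (hdist : ∀ n m : Fin N, n ≠ m → x n t ≠ x m t) :
    ∀ n : Fin N,
      deriv (deriv (x n)) t
        = (∑ ℓ ∈ Finset.univ \ {n},
            2 * deriv (x n) t * deriv (x ℓ) t / (x n t - x ℓ t))
          - (∏ ℓ ∈ Finset.univ \ {n}, (x n t - x ℓ t))⁻¹ *
              ∑ j ∈ Finset.Icc 1 N, (x n t) ^ (N - j) * deriv (deriv (ξ j)) t :=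
  simple_roots_second_derivative_formula_general N x hdiff hdiff2 ξ hξ t hdist
end

section
/- Let x₁,...,x_N be pairwise distinct elements of a field, m₁ ≥ 1, and define y_n = (−1)^n σ_n^{(N+m₁)}(x₁,...,x₁,x₁,x₂,...,x_N) (x₁ repeated m₁+1 times) for 1 ≤ n ≤ N+m₁, and ξ_n = (−1)^n σ_n^{(N)}(x₁,...,x_N) for 1 ≤ n ≤ N. Then ξ_n = y_n + Σ_{j=1}^{n−1} α_{nj} x₁^{n−j} y_j − γ_n x₁^n, where α_{nj} are the inverse-matrix coefficients defined via β^{(k)} recursion (α_{nm} = (−1)^{n+m+1} Σ_{k=1}^{n−m} β_{nm}^{(k)}, β_{nm}^{(1)} = binom(m₁,n−m) for m ≤ n−1 else 0, β_{nm}^{(k)} = −Σ_{j=m+1}^{n+1−k} binom(m₁,j−m) β_{nj}^{(k−1)}) and γ_n = Σ_{j=1}^{n−1} (−1)^j binom(m₁,j) α_{nj} + (−1)^n binom(m₁,n). -/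
open Finset

/-- The coefficients `α_{nm}` (with 1-based indices). -/
def alphaCoeff (m₁ n m : ℕ) : ℤ :=
  (-1 : ℤ) ^ (n + m + 1) * ∑ k ∈ Finset.Icc 1 (n - m), betaCoeff m₁ k n m

/-- The coefficients `γ_n`. -/
def gammaCoeff (m₁ n : ℕ) : ℤ :=
  (∑ j ∈ Finset.Icc 1 (n - 1), (-1 : ℤ) ^ j * (m₁.choose j : ℤ) * alphaCoeff m₁ n j)
    + (-1 : ℤ) ^ n * (m₁.choose n : ℤ)

/-- inverse sequence -/
def dCoeff (m₁ : ℕ) : ℕ → ℤ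
  | 0 => 1
  | (r + 1) =>
      - ∑ i ∈ Finset.range (r + 1),
          (-1 : ℤ) ^ (i + 1) * (m₁.choose (i + 1) : ℤ) * dCoeff m₁ (r - i)
  decreasing_by exact Nat.lt_succ_of_le (Nat.sub_le r i)

lemma negpow (a b : ℕ) (h : a % 2 = b % 2) : (-1:ℤ)^a = (-1:ℤ)^b := by
  rcases Nat.even_or_odd a with ha | ha
  · have hb : Even b := by rw [Nat.even_iff] at *; omega
    rw [ha.neg_one_pow, hb.neg_one_pow]
  · have hb : Odd b := by rw [Nat.odd_iff] at *; omega
    rw [ha.neg_one_pow, hb.neg_one_pow]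

lemma sum_Icc_eq_range {M : Type*} [AddCommMonoid M] (f : ℕ → M) (a b : ℕ) :
    ∑ j ∈ Finset.Icc a b, f j = ∑ i ∈ Finset.range (b + 1 - a), f (a + i) := by
  rw [← Finset.Ico_add_one_right_eq_Icc, Finset.sum_Ico_eq_sum_range]

lemma dCoeff_zero (m₁ : ℕ) : dCoeff m₁ 0 = 1 := by rw [dCoeff]

lemma dCoeff_succ (m₁ r : ℕ) : dCoeff m₁ (r + 1)
    = - ∑ i ∈ Finset.range (r + 1),
        (-1 : ℤ) ^ (i + 1) * (m₁.choose (i + 1) : ℤ) * dCoeff m₁ (r - i) := by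
  rw [dCoeff]

lemma beta_succ (m₁ k n m : ℕ) :
    betaCoeff m₁ (k + 2) n m
      = - ∑ j ∈ Finset.Icc (m + 1) (n + 1 - (k + 2)),
          (m₁.choose (j - m) : ℤ) * betaCoeff m₁ (k + 1) n j := by
  rfl

lemma alpha_eq (m₁ : ℕ) : ∀ r n m : ℕ, m < n → n - m = r →
    alphaCoeff m₁ n m = dCoeff m₁ r := by
  intro r
  induction r using Nat.strong_induction_on with
  | _ r ih =>
    intro n m hmn hr
    obtain ⟨r', rfl⟩ : ∃ r', r = r' + 1 := ⟨r - 1, by omega⟩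
    rw [alphaCoeff, hr]
    -- split off k = 1
    have h1 : Finset.Icc 1 (r' + 1) = insert 1 (Finset.Icc 2 (r' + 1)) := by
      ext k; simp [Finset.mem_Icc, Finset.mem_insert]; omega
    rw [h1, Finset.sum_insert (by simp)]
    have hb1 : betaCoeff m₁ 1 n m = (m₁.choose (n - m) : ℤ) := by
      simp [betaCoeff, hmn]
    rw [hb1]
    -- rewrite the k ≥ 2 sum
    have h2 : ∑ k ∈ Finset.Icc 2 (r' + 1), betaCoeff m₁ k n m
        = ∑ k ∈ Finset.Icc 2 (r' + 1),
            (- ∑ j ∈ Finset.Icc (m + 1) (n + 1 - k),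
              (m₁.choose (j - m) : ℤ) * betaCoeff m₁ (k - 1) n j) := by
      refine Finset.sum_congr rfl fun k hk => ?_
      simp only [Finset.mem_Icc] at hk
      obtain ⟨k', rfl⟩ : ∃ k', k = k' + 2 := ⟨k - 2, by omega⟩
      rw [beta_succ]; norm_num
    rw [h2, Finset.sum_neg_distrib]
    rw [Finset.sum_comm' (s' := fun j => Finset.Icc 2 (n + 1 - j)) (t' := Finset.Icc (m+1) (n-1))
      (fun k j => by simp only [Finset.mem_Icc]; omega)]
    have h3 : ∑ j ∈ Finset.Icc (m+1) (n-1), ∑ k ∈ Finset.Icc 2 (n + 1 - j),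
          (m₁.choose (j - m) : ℤ) * betaCoeff m₁ (k - 1) n j
        = (-1:ℤ)^(n+m+1) * ∑ i ∈ Finset.range r',
            (-1:ℤ)^(i+1) * (m₁.choose (i+1) : ℤ) * dCoeff m₁ (r' - i) := by
      rw [sum_Icc_eq_range, Finset.mul_sum]
      have hub : n - 1 + 1 - (m + 1) = r' := by omega
      rw [hub]
      refine Finset.sum_congr rfl fun i hi => ?_
      simp only [Finset.mem_range] at hi
      have hsum : ∑ k ∈ Finset.Icc 2 (n + 1 - (m + 1 + i)),
            betaCoeff m₁ (k - 1) n (m + 1 + i)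
          = ∑ k ∈ Finset.Icc 1 (n - (m + 1 + i)), betaCoeff m₁ k n (m + 1 + i) := by
        rw [sum_Icc_eq_range, sum_Icc_eq_range]
        have e1 : n + 1 - (m + 1 + i) + 1 - 2 = n - (m + 1 + i) := by omega
        have e2 : n - (m + 1 + i) + 1 - 1 = n - (m + 1 + i) := by omega
        rw [e1, e2]
        exact Finset.sum_congr rfl fun k _ => by norm_num
      rw [← Finset.mul_sum, hsum]
      have halpha : ∑ k ∈ Finset.Icc 1 (n - (m + 1 + i)), betaCoeff m₁ k n (m + 1 + i)
          = (-1:ℤ)^(n + (m+1+i) + 1) * alphaCoeff m₁ n (m + 1 + i) := by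
        rw [alphaCoeff, ← mul_assoc, ← pow_add]
        rw [negpow (n + (m+1+i) + 1 + (n + (m+1+i) + 1)) 0 (by omega)]
        ring
      rw [halpha, ih (n - (m+1+i)) (by omega) n (m+1+i) (by omega) rfl]
      have hji : m + 1 + i - m = i + 1 := by omega
      have hni : n - (m + 1 + i) = r' - i := by omega
      rw [hji, hni, negpow (n + (m+1+i) + 1) ((n+m+1) + (i+1)) (by omega), pow_add]
      ring
    rw [h3, dCoeff_succ, Finset.sum_range_succ]
    have hd0 : dCoeff m₁ (r' - r') = 1 := by rw [Nat.sub_self, dCoeff_zero]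
    rw [hd0, hr, negpow (r' + 1) ((n + m + 1) + 1) (by omega), pow_add]
    have hs : ((-1:ℤ))^(n+m+1) * ((-1:ℤ))^(n+m+1) = 1 := by
      rw [← pow_add, negpow ((n+m+1)+(n+m+1)) 0 (by omega), pow_zero]
    set t := ((-1:ℤ))^(n+m+1) with ht
    set T := ∑ i ∈ Finset.range r', (-1:ℤ)^(i+1) * (m₁.choose (i+1) : ℤ) * dCoeff m₁ (r' - i) with hT
    linear_combination (-T) * hs

lemma gamma_eq (m₁ n : ℕ) (hn : 1 ≤ n) : gammaCoeff m₁ n = - dCoeff m₁ n := by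
  obtain ⟨r, rfl⟩ : ∃ r, n = r + 1 := ⟨n - 1, by omega⟩
  rw [gammaCoeff, dCoeff_succ, Finset.sum_range_succ]
  have h : ∑ j ∈ Finset.Icc 1 (r + 1 - 1), (-1:ℤ)^j * (m₁.choose j : ℤ) * alphaCoeff m₁ (r+1) j
      = ∑ i ∈ Finset.range r, (-1:ℤ)^(i+1) * (m₁.choose (i+1) : ℤ) * dCoeff m₁ (r - i) := by
    rw [sum_Icc_eq_range]
    have e : r + 1 - 1 + 1 - 1 = r := by omega
    rw [e]
    refine Finset.sum_congr rfl fun i hi => ?_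
    simp only [Finset.mem_range] at hi
    rw [alpha_eq m₁ (r + 1 - (1 + i)) (r+1) (1+i) (by omega) rfl]
    have e2 : r + 1 - (1 + i) = r - i := by omega
    rw [e2, add_comm 1 i]
  rw [h, Nat.sub_self, dCoeff_zero]
  ring

lemma esymm_cons {R : Type*} [CommSemiring R] (a : R) (s : Multiset R) (n : ℕ) :
    (a ::ₘ s).esymm (n + 1) = s.esymm (n + 1) + a * s.esymm n := by
  simp only [Multiset.esymm, Multiset.powersetCard_cons, Multiset.map_add, Multiset.sum_add,
    Multiset.map_map, Function.comp_def, Multiset.prod_cons]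
  rw [← Multiset.sum_map_mul_left]

lemma esymm_rep {R : Type*} [CommSemiring R] (m : ℕ) (a : R) (s : Multiset R) (n : ℕ) :
    (Multiset.replicate m a + s).esymm n
      = ∑ i ∈ range (n + 1), (m.choose i : R) * a ^ i * s.esymm (n - i) := by
  induction m generalizing n with
  | zero =>
    rw [Multiset.replicate_zero, zero_add, Finset.sum_range_succ']
    simp [Nat.choose_eq_zero_of_lt]
  | succ m ih =>
    rw [Multiset.replicate_succ, Multiset.cons_add]
    cases n with
    | zero => simp [Multiset.esymm]
    | succ n =>
      rw [esymm_cons, ih, ih, Finset.mul_sum,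
        Finset.sum_range_succ' (fun i => ((m+1).choose i : R) * a ^ i * s.esymm (n + 1 - i)),
        Finset.sum_range_succ' (fun i => (m.choose i : R) * a ^ i * s.esymm (n + 1 - i))]
    -- combine
      simp only [Nat.choose_zero_right, Nat.cast_one, pow_zero, one_mul, mul_one,
        Nat.succ_sub_succ, Nat.sub_zero]
      rw [add_right_comm, ← Finset.sum_add_distrib]
      congr 1
      refine Finset.sum_congr rfl fun i _ => ?_
      rw [Nat.choose_succ_succ, Nat.cast_add]
      ring
theorem xi_in_terms_of_y
    {K : Type*} [Field K] (N m₁ : ℕ) (hN : 2 ≤ N) (hm : 1 ≤ m₁)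
    (x : Fin N → K) (hdist : Function.Injective x)
    (x₁ : K) (hx₁ : x₁ = x ⟨0, by omega⟩)
    (y ξ : ℕ → K)
    (hy : ∀ n, y n = (-1 : K) ^ n *
      Multiset.esymm (Multiset.replicate m₁ x₁ + Finset.univ.val.map x) n)
    (hξ : ∀ n, ξ n = (-1 : K) ^ n * Multiset.esymm (Finset.univ.val.map x) n) :
    ∀ n, 1 ≤ n → n ≤ N →
      ξ n = y n + (∑ j ∈ Finset.Icc 1 (n - 1),
          (alphaCoeff m₁ n j : K) * x₁ ^ (n - j) * y j)
        - (gammaCoeff m₁ n : K) * x₁ ^ n := by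
  have hy0 : y 0 = 1 := by
    rw [hy]; simp [Multiset.esymm]
  have hξ0 : ξ 0 = 1 := by
    rw [hξ]; simp [Multiset.esymm]
  have hξe : ∀ k, Multiset.esymm (Finset.univ.val.map x) k = (-1 : K) ^ k * ξ k := by
    intro k
    rw [hξ k, ← mul_assoc, ← pow_add, Even.neg_one_pow ⟨k, rfl⟩, one_mul]
  have hconv : ∀ n, y n = ∑ i ∈ Finset.range (n + 1),
      (-1 : K) ^ i * (m₁.choose i : K) * x₁ ^ i * ξ (n - i) := by
    intro n
    rw [hy, esymm_rep, Finset.mul_sum]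
    refine Finset.sum_congr rfl fun i hi => ?_
    simp only [Finset.mem_range] at hi
    rw [hξe (n - i)]
    have hsign : (-1 : K) ^ n * (-1 : K) ^ (n - i) = (-1 : K) ^ i := by
      rw [← pow_add, show n + (n - i) = i + 2 * (n - i) by omega, pow_add, pow_mul]
      norm_num
    calc (-1 : K) ^ n * ((m₁.choose i : K) * x₁ ^ i * ((-1 : K) ^ (n - i) * ξ (n - i)))
        = ((-1 : K) ^ n * (-1 : K) ^ (n - i)) * ((m₁.choose i : K) * x₁ ^ i * ξ (n - i)) := by
          ring
      _ = (-1 : K) ^ i * (m₁.choose i : K) * x₁ ^ i * ξ (n - i) := by rw [hsign]; ring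
  have hinv : ∀ n, ξ n = ∑ j ∈ Finset.range (n + 1),
      (dCoeff m₁ (n - j) : K) * x₁ ^ (n - j) * y j := by
    intro n
    induction n using Nat.strong_induction_on with
    | _ n ih =>
      match n with
      | 0 => simp [hy0, hξ0, dCoeff_zero]
      | (n + 1) =>
        have h0 := hconv (n + 1)
        rw [Finset.sum_range_succ'] at h0
        simp only [pow_zero, Nat.choose_zero_right, Nat.cast_one, mul_one, one_mul,
          Nat.sub_zero, Nat.succ_sub_succ] at h0
        have hx : ξ (n + 1) = y (n + 1) - ∑ i ∈ Finset.range (n + 1),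
            (-1 : K) ^ (i + 1) * (m₁.choose (i + 1) : K) * x₁ ^ (i + 1) * ξ (n - i) := by
          rw [h0]; ring
        rw [hx]
        have hih : ∑ i ∈ Finset.range (n + 1),
              (-1 : K) ^ (i + 1) * (m₁.choose (i + 1) : K) * x₁ ^ (i + 1) * ξ (n - i)
            = ∑ i ∈ Finset.range (n + 1), ∑ j ∈ Finset.range (n - i + 1),
              (-1 : K) ^ (i + 1) * (m₁.choose (i + 1) : K) * x₁ ^ (i + 1) *
                ((dCoeff m₁ (n - i - j) : K) * x₁ ^ (n - i - j) * y j) := by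
          refine Finset.sum_congr rfl fun i hi => ?_
          simp only [Finset.mem_range] at hi
          rw [ih (n - i) (by omega), Finset.mul_sum]
        rw [hih, Finset.sum_comm' (t' := Finset.range (n + 1))
          (s' := fun j => Finset.range (n - j + 1))
          (fun i j => by simp only [Finset.mem_range]; omega)]
        have hj : ∀ j ∈ Finset.range (n + 1),
            ∑ i ∈ Finset.range (n - j + 1),
              (-1 : K) ^ (i + 1) * (m₁.choose (i + 1) : K) * x₁ ^ (i + 1) *
                ((dCoeff m₁ (n - i - j) : K) * x₁ ^ (n - i - j) * y j)
            = -(dCoeff m₁ (n - j + 1) : K) * (x₁ ^ (n + 1 - j) * y j) := by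
          intro j hj
          simp only [Finset.mem_range] at hj
          have hterm : ∀ i ∈ Finset.range (n - j + 1),
              (-1 : K) ^ (i + 1) * (m₁.choose (i + 1) : K) * x₁ ^ (i + 1) *
                ((dCoeff m₁ (n - i - j) : K) * x₁ ^ (n - i - j) * y j)
              = ((-1 : K) ^ (i + 1) * (m₁.choose (i + 1) : K) * (dCoeff m₁ (n - j - i) : K))
                  * (x₁ ^ (n + 1 - j) * y j) := by
            intro i hi
            simp only [Finset.mem_range] at hi
            have e1 : n - i - j = n - j - i := by omega
            have e2 : x₁ ^ (i + 1) * x₁ ^ (n - j - i) = x₁ ^ (n + 1 - j) := by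
              rw [← pow_add]; congr 1; omega
            rw [e1, ← e2]; ring
          rw [Finset.sum_congr rfl hterm, ← Finset.sum_mul]
          congr 1
          have hcast := congrArg (fun z : ℤ => (z : K)) (dCoeff_succ m₁ (n - j))
          push_cast at hcast
          rw [hcast, neg_neg]
        rw [Finset.sum_congr rfl hj, Finset.sum_range_succ
          (fun j => (dCoeff m₁ (n + 1 - j) : K) * x₁ ^ (n + 1 - j) * y j)]
        simp only [Nat.sub_self, dCoeff_zero, Int.cast_one, one_mul, pow_zero, mul_one]
        have hfix : ∀ j ∈ Finset.range (n + 1),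
            -(dCoeff m₁ (n - j + 1) : K) * (x₁ ^ (n + 1 - j) * y j)
            = -((dCoeff m₁ (n + 1 - j) : K) * x₁ ^ (n + 1 - j) * y j) := by
          intro j hj
          simp only [Finset.mem_range] at hj
          rw [show n - j + 1 = n + 1 - j by omega]
          ring
        rw [Finset.sum_congr rfl hfix, Finset.sum_neg_distrib]
        ring
  intro n hn1 hnN
  rw [hinv n, Finset.sum_range_succ, Nat.sub_self, dCoeff_zero]
  have hsplit : Finset.range n = insert 0 (Finset.Icc 1 (n - 1)) := by
    ext j; simp only [Finset.mem_range, Finset.mem_insert, Finset.mem_Icc]; omega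
  rw [hsplit, Finset.sum_insert (by simp)]
  have halpha : ∀ j ∈ Finset.Icc 1 (n - 1),
      (dCoeff m₁ (n - j) : K) * x₁ ^ (n - j) * y j
        = (alphaCoeff m₁ n j : K) * x₁ ^ (n - j) * y j := by
    intro j hj
    simp only [Finset.mem_Icc] at hj
    rw [alpha_eq m₁ (n - j) n j (by omega) rfl]
  rw [Finset.sum_congr rfl halpha, gamma_eq m₁ n hn1, hy0, Nat.sub_zero]
  push_cast
  ring
end
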